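/- arXiv:1610.07108 — 5 statements merged into one kernel-verified Lean document; each statement's English description precedes it below -/
import Mathlib

section
/- Let C ⊆ ℝⁿ be a closed cone and v ∈ ℝⁿ. Then the Euclidean norm of the projection of v onto C equals the supremum of ⟨u, v⟩ over all u in C intersected with the closed unit ball, i.e. ‖P_C(v)‖ = sup_{u ∈ C ∩ B} ⟨u, v⟩. -/
open scoped RealInnerProductSpace

/-- For a closed cone `C` and a point `v`, the norm of a Euclidean projection of `v`
onto `C` equals the supremum of `⟪u, v⟫` over `u ∈ C ∩ B`, `B` the closed unit ball. -/
theorem norm_proj_onto_cone_eq_sup {n : ℕ} (C : Set (EuclideanSpace ℝ (Fin n)))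
    (hCclosed : IsClosed C) (hCne : C.Nonempty)
    (hCcone : ∀ c ∈ C, ∀ t : ℝ, 0 ≤ t → t • c ∈ C)
    (v p : EuclideanSpace ℝ (Fin n)) (hpC : p ∈ C)
    (hproj : ∀ c ∈ C, ‖v - p‖ ≤ ‖v - c‖) :
    ‖p‖ = sSup ((fun u => ⟪u, v⟫) '' (C ∩ Metric.closedBall 0 1)) := by
  obtain ⟨c₀, hc₀⟩ := hCne
  have h0C : (0 : EuclideanSpace ℝ (Fin n)) ∈ C := by
    simpa using hCcone c₀ hc₀ 0 le_rfl
  set S := (fun u => ⟪u, v⟫) '' (C ∩ Metric.closedBall 0 1) with hS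
  have h0S : (0:ℝ) ∈ S := ⟨0, ⟨h0C, by simp⟩, by simp⟩
  have sqproj : ∀ c ∈ C, ‖v - p‖ ^ 2 ≤ ‖v - c‖ ^ 2 := by
    intro c hc
    have := hproj c hc
    nlinarith [norm_nonneg (v - p), norm_nonneg (v - c)]
  have expand : ∀ x : EuclideanSpace ℝ (Fin n),
      ‖v - x‖ ^ 2 = ‖v‖ ^ 2 - 2 * ⟪v, x⟫ + ‖x‖ ^ 2 := fun x => norm_sub_sq_real v x
  -- key: ⟪p, v⟫ = ‖p‖^2
  have key : ⟪v, p⟫ = ‖p‖ ^ 2 := by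
    rcases eq_or_ne p 0 with hp | hp
    · simp [hp]
    · have hb : (0:ℝ) < ‖p‖ ^ 2 := pow_pos (norm_pos_iff.mpr hp) 2
      have h0 : ‖v - p‖ ^ 2 ≤ ‖v - 0‖ ^ 2 := sqproj 0 h0C
      rw [sub_zero, expand p] at h0
      -- so ‖p‖^2 ≤ 2 ⟪v,p⟫, in particular ⟪v,p⟫ > 0
      have ha : 0 < ⟪v, p⟫ := by nlinarith
      set t : ℝ := ⟪v, p⟫ / ‖p‖ ^ 2 with ht
      have ht0 : 0 ≤ t := le_of_lt (div_pos ha hb)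
      have h1 : ‖v - p‖ ^ 2 ≤ ‖v - t • p‖ ^ 2 := sqproj _ (hCcone p hpC t ht0)
      rw [expand p, expand (t • p)] at h1
      rw [real_inner_smul_right, norm_smul] at h1
      simp only [Real.norm_eq_abs, mul_pow, sq_abs] at h1
      have h2 : t * ‖p‖ ^ 2 = ⟪v, p⟫ := div_mul_cancel₀ _ hb.ne'
      nlinarith [sq_nonneg (⟪v, p⟫ - ‖p‖ ^ 2)]
  -- upper bound
  have ub : ∀ x ∈ S, x ≤ ‖p‖ := by
    rintro x ⟨u, ⟨huC, huB⟩, rfl⟩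
    simp only
    have hu1 : ‖u‖ ≤ 1 := by
      simpa [Metric.mem_closedBall] using huB
    rcases le_or_gt ⟪u, v⟫ 0 with h | h
    · exact h.trans (norm_nonneg p)
    · have hu0 : u ≠ 0 := by
        rintro rfl; simp at h
      have hnu : (0:ℝ) < ‖u‖ ^ 2 := pow_pos (norm_pos_iff.mpr hu0) 2
      have hcomm : ⟪u, v⟫ = ⟪v, u⟫ := (real_inner_comm u v).symm
      set s : ℝ := ⟪v, u⟫ / ‖u‖ ^ 2 with hs
      have hs0 : 0 ≤ s := le_of_lt (div_pos (hcomm ▸ h) hnu)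
      have h1 : ‖v - p‖ ^ 2 ≤ ‖v - s • u‖ ^ 2 := sqproj _ (hCcone u huC s hs0)
      rw [expand p, expand (s • u)] at h1
      rw [real_inner_smul_right, norm_smul] at h1
      simp only [Real.norm_eq_abs, mul_pow, sq_abs] at h1
      have h2 : s * ‖u‖ ^ 2 = ⟪v, u⟫ := div_mul_cancel₀ _ hnu.ne'
      -- from h1 and key: ‖p‖^2 ≥ ⟪v,u⟫^2 / ‖u‖^2 ≥ ⟪v,u⟫^2
      have h3 : ⟪v, u⟫ ^ 2 ≤ ‖p‖ ^ 2 * ‖u‖ ^ 2 := by nlinarith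
      have hsq1 : ‖u‖ ^ 2 ≤ 1 := by nlinarith [norm_nonneg u]
      have h4 : ⟪v, u⟫ ^ 2 ≤ ‖p‖ ^ 2 := by
        nlinarith [mul_le_mul_of_nonneg_left hsq1 (sq_nonneg ‖p‖)]
      rw [hcomm]
      nlinarith [norm_nonneg p, hcomm ▸ h]
  have hbdd : BddAbove S := ⟨‖p‖, ub⟩
  refine le_antisymm ?_ (csSup_le ⟨0, h0S⟩ ub)
  rcases eq_or_ne p 0 with hp | hp
  · simpa [hp] using le_csSup hbdd h0S
  · have hpn : (0:ℝ) < ‖p‖ := norm_pos_iff.mpr hp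
    have hmem : ‖p‖ ∈ S := by
      refine ⟨‖p‖⁻¹ • p, ⟨hCcone p hpC _ (by positivity), ?_⟩, ?_⟩
      · simp [Metric.mem_closedBall, norm_smul, abs_of_pos (inv_pos.mpr hpn),
          inv_mul_cancel₀ hpn.ne']
      · simp only [real_inner_smul_left]
        rw [real_inner_comm, key]
        field_simp
    exact le_csSup hbdd hmem
end

section
/- Let D ⊆ ℝⁿ be a nonempty closed set containing 0, and let C be a nonempty closed cone with D ⊆ C. Then for all v ∈ ℝⁿ, ‖P_D(v)‖ ≤ 2‖P_C(v)‖. -/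
set_option maxHeartbeats 1000000


/-- Comparison of projections: if `D` is a nonempty closed set containing `0` and `C` is a
nonempty closed cone containing `D`, then `‖P_D(v)‖ ≤ 2 ‖P_C(v)‖`. -/
theorem norm_proj_le_two_norm_proj_cone {n : ℕ}
    (D C : Set (EuclideanSpace ℝ (Fin n)))
    (hDclosed : IsClosed D) (hDne : D.Nonempty) (hD0 : (0 : EuclideanSpace ℝ (Fin n)) ∈ D)
    (hCclosed : IsClosed C) (hCne : C.Nonempty)
    (hCcone : ∀ c ∈ C, ∀ t : ℝ, 0 ≤ t → t • c ∈ C) (hDC : D ⊆ C)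
    (v pD pC : EuclideanSpace ℝ (Fin n))
    (hpD : pD ∈ D) (hprojD : ∀ d ∈ D, ‖v - pD‖ ≤ ‖v - d‖)
    (hpC : pC ∈ C) (hprojC : ∀ c ∈ C, ‖v - pC‖ ≤ ‖v - c‖) :
    ‖pD‖ ≤ 2 * ‖pC‖ := by
  by_cases hb : pD = 0
  · rw [hb, norm_zero]; positivity
  have hb0 : (0:ℝ) < ‖pD‖ := norm_pos_iff.mpr hb
  have h0C : (0 : EuclideanSpace ℝ (Fin n)) ∈ C := by
    obtain ⟨c, hc⟩ := hCne
    simpa using hCcone c hc 0 le_rfl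
  set a : ℝ := inner ℝ v pD with ha
  set b : ℝ := ‖pD‖ with hbdef
  set c : ℝ := inner ℝ v pC with hc
  set B : ℝ := ‖pC‖ with hB
  have expD : ‖v - pD‖ ^ 2 = ‖v‖ ^ 2 - 2 * a + b ^ 2 := by
    rw [@norm_sub_sq_real]
  have expC : ‖v - pC‖ ^ 2 = ‖v‖ ^ 2 - 2 * c + B ^ 2 := by
    rw [@norm_sub_sq_real]
  -- step 1: b^2 ≤ 2a
  have h1 : b ^ 2 ≤ 2 * a := by
    have h := hprojD 0 hD0
    simp only [sub_zero] at h
    have h2 : ‖v - pD‖ ^ 2 ≤ ‖v‖ ^ 2 := pow_le_pow_left₀ (norm_nonneg _) h 2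
    nlinarith [expD]
  -- step 2: c = B^2 (orthogonality for cone projection)
  have h2 : c = B ^ 2 := by
    have hB0 : (0:ℝ) ≤ B := norm_nonneg _
    have hle0 : ‖v - pC‖ ^ 2 ≤ ‖v‖ ^ 2 := by
      have h := hprojC 0 h0C
      simp only [sub_zero] at h
      exact pow_le_pow_left₀ (norm_nonneg _) h 2
    have hBc : B ^ 2 ≤ 2 * c := by nlinarith [expC]
    by_cases hBz : B = 0
    · have hpz : pC = 0 := norm_eq_zero.mp hBz
      rw [hc, hpz, hBz, inner_zero_right]
      ring
    · have hBpos : (0:ℝ) < B := lt_of_le_of_ne hB0 (Ne.symm hBz)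
      have hcpos : (0:ℝ) ≤ c := by nlinarith
      set t : ℝ := c / B ^ 2 with ht
      have htpos : (0:ℝ) ≤ t := by positivity
      have hmem : t • pC ∈ C := hCcone pC hpC t htpos
      have h := hprojC _ hmem
      have h2 : ‖v - pC‖ ^ 2 ≤ ‖v - t • pC‖ ^ 2 := pow_le_pow_left₀ (norm_nonneg _) h 2
      have expT : ‖v - t • pC‖ ^ 2 = ‖v‖ ^ 2 - 2 * (t * c) + t ^ 2 * B ^ 2 := by
        rw [@norm_sub_sq_real, real_inner_smul_right, norm_smul, Real.norm_eq_abs,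
          abs_of_nonneg htpos, ← hc, ← hB]
        ring
      have hBB : (0:ℝ) < B ^ 2 := by positivity
      have ht2 : t * c = c ^ 2 / B ^ 2 := by rw [ht]; field_simp
      have ht3 : t ^ 2 * B ^ 2 = c ^ 2 / B ^ 2 := by rw [ht]; field_simp
      have key : B ^ 2 - 2 * c ≤ -(c ^ 2 / B ^ 2) := by
        rw [expC, expT, ht2, ht3] at h2
        linarith
      have hdiv : c ^ 2 / B ^ 2 * B ^ 2 = c ^ 2 := div_mul_cancel₀ _ (ne_of_gt hBB)
      have hsq : (B ^ 2 - c) ^ 2 ≤ 0 := by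
        nlinarith [mul_le_mul_of_nonneg_right key (le_of_lt hBB)]
      have : B ^ 2 - c = 0 := by nlinarith [sq_nonneg (B ^ 2 - c)]
      linarith
  -- step 3: a ≤ B * b
  have hB0 : (0:ℝ) ≤ B := norm_nonneg _
  have ha0 : (0:ℝ) ≤ a := by nlinarith
  have h3 : a ≤ B * b := by
    set t : ℝ := a / b ^ 2 with ht
    have htpos : (0:ℝ) ≤ t := by positivity
    have hmem : t • pD ∈ C := hCcone pD (hDC hpD) t htpos
    have h := hprojC _ hmem
    have h2' : ‖v - pC‖ ^ 2 ≤ ‖v - t • pD‖ ^ 2 := pow_le_pow_left₀ (norm_nonneg _) h 2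
    have expT : ‖v - t • pD‖ ^ 2 = ‖v‖ ^ 2 - 2 * (t * a) + t ^ 2 * b ^ 2 := by
      rw [@norm_sub_sq_real, real_inner_smul_right, norm_smul, Real.norm_eq_abs,
        abs_of_nonneg htpos, ← ha, ← hbdef]
      ring
    have hbb : (0:ℝ) < b ^ 2 := by positivity
    have ht2 : t * a = a ^ 2 / b ^ 2 := by rw [ht]; field_simp
    have ht3 : t ^ 2 * b ^ 2 = a ^ 2 / b ^ 2 := by rw [ht]; field_simp
    have key : a ^ 2 / b ^ 2 ≤ B ^ 2 := by
      rw [expC, expT, ht2, ht3, h2] at h2'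
      linarith
    have hdiv : a ^ 2 / b ^ 2 * b ^ 2 = a ^ 2 := div_mul_cancel₀ _ (ne_of_gt hbb)
    have key2 : a ^ 2 ≤ B ^ 2 * b ^ 2 := by
      nlinarith [mul_le_mul_of_nonneg_right key (le_of_lt hbb)]
    nlinarith [mul_nonneg hB0 (le_of_lt hb0)]
  nlinarith
end

section
/- Let D ⊆ ℝⁿ be a nonempty closed convex set containing 0, and C a nonempty closed cone with D ⊆ C. Then for all v ∈ ℝⁿ, ‖P_D(v)‖ ≤ ‖P_C(v)‖. -/
open RealInnerProductSpace

/-- Comparison of projections, convex case: if `D` is a nonempty closed convex set containing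
`0` and `C` is a nonempty closed cone containing `D`, then `‖P_D(v)‖ ≤ ‖P_C(v)‖`. -/
theorem norm_proj_le_norm_proj_cone_of_convex {n : ℕ}
    (D C : Set (EuclideanSpace ℝ (Fin n)))
    (hDclosed : IsClosed D) (hDne : D.Nonempty) (hD0 : (0 : EuclideanSpace ℝ (Fin n)) ∈ D)
    (hDconvex : Convex ℝ D)
    (hCclosed : IsClosed C) (hCne : C.Nonempty)
    (hCcone : ∀ c ∈ C, ∀ t : ℝ, 0 ≤ t → t • c ∈ C) (hDC : D ⊆ C)
    (v pD pC : EuclideanSpace ℝ (Fin n))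
    (hpD : pD ∈ D) (hprojD : ∀ d ∈ D, ‖v - pD‖ ≤ ‖v - d‖)
    (hpC : pC ∈ C) (hprojC : ∀ c ∈ C, ‖v - pC‖ ≤ ‖v - c‖) :
    ‖pD‖ ≤ ‖pC‖ := by
  rcases eq_or_ne pD 0 with h0 | h0
  · simp [h0]
  have key : ∀ (w : EuclideanSpace ℝ (Fin n)),
      ‖v - w‖ ^ 2 = ‖v‖ ^ 2 - 2 * ⟪v, w⟫ + ‖w‖ ^ 2 := by
    intro w
    rw [@norm_sub_sq_real]
  have ha : (⟪v, pD⟫ : ℝ) = ⟪v, pD⟫ := rfl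
  set a : ℝ := ⟪v, pD⟫ with ha
  set b : ℝ := ‖pD‖ ^ 2 with hbdef
  have hb : 0 < b := by
    have : 0 < ‖pD‖ := norm_pos_iff.mpr h0
    positivity
  have sqD : ∀ d ∈ D, ‖v - pD‖ ^ 2 ≤ ‖v - d‖ ^ 2 := fun d hd =>
    pow_le_pow_left₀ (norm_nonneg _) (hprojD d hd) 2
  have sqC : ∀ c ∈ C, ‖v - pC‖ ^ 2 ≤ ‖v - c‖ ^ 2 := fun c hc =>
    pow_le_pow_left₀ (norm_nonneg _) (hprojC c hc) 2
  have expand : ∀ (t : ℝ) (w : EuclideanSpace ℝ (Fin n)),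
      ‖v - t • w‖ ^ 2 = ‖v‖ ^ 2 - 2 * (t * ⟪v, w⟫) + t ^ 2 * ‖w‖ ^ 2 := by
    intro t w
    rw [key, real_inner_smul_right, norm_smul, mul_pow, Real.norm_eq_abs, sq_abs]
  -- Step 1 : b ≤ a
  have step1 : b ≤ a := by
    by_contra hcon
    push_neg at hcon
    set t : ℝ := max (a / b) 0 with htdef
    have ht0 : 0 ≤ t := le_max_right _ _
    have ht1 : t ≤ 1 := by
      apply max_le _ zero_le_one
      rw [div_le_one hb]; linarith
    have hmem : t • pD ∈ D := by
      have h := hDconvex hD0 hpD (by linarith : (0:ℝ) ≤ 1 - t) ht0 (by ring)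
      simpa using h
    have h3 := sqD _ hmem
    rw [expand, key, ← ha, ← hbdef] at h3
    -- h3 : ‖v‖^2 - 2*a + b ≤ ‖v‖^2 - 2*(t*a) + t^2*b
    rcases le_or_gt a 0 with hva | hva
    · have ht : t = 0 := by
        rw [htdef, max_eq_right]
        exact div_nonpos_of_nonpos_of_nonneg hva hb.le
      rw [ht] at h3
      nlinarith
    · have ht : t = a / b := by
        rw [htdef, max_eq_left]
        positivity
      rw [ht] at h3
      have hmul : a / b * b = a := div_mul_cancel₀ a hb.ne'
      nlinarith [sq_nonneg (a - b), sq_nonneg (a / b * b - a)]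
  have hab : 0 < a := lt_of_lt_of_le hb step1
  set a' : ℝ := ⟪v, pC⟫ with ha'
  set b' : ℝ := ‖pC‖ ^ 2 with hb'def
  -- Step 2 : comparing pC with the ray through pD
  have step2 : a ^ 2 / b ≤ 2 * a' - b' := by
    have hmem : (a / b) • pD ∈ C := hCcone pD (hDC hpD) _ (div_nonneg hab.le hb.le)
    have h3 := sqC _ hmem
    rw [expand, key, ← ha, ← hbdef, ← ha', ← hb'def] at h3
    have hmul : a / b * b = a := div_mul_cancel₀ a hb.ne'
    have hsq : (a / b) ^ 2 * b = a ^ 2 / b := by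
      field_simp
    rw [hsq] at h3
    have h4 : a / b * a = a ^ 2 / b := by field_simp
    rw [h4] at h3
    linarith
  -- Step 3 : a^2/b ≤ b'
  have step3 : a ^ 2 / b ≤ b' := by
    rcases eq_or_ne pC 0 with hc0 | hc0
    · exfalso
      have hb'0 : b' = 0 := by simp [hb'def, hc0]
      have ha'0 : a' = 0 := by simp [ha', hc0]
      have hpos : (0:ℝ) < a ^ 2 / b := by positivity
      rw [hb'0, ha'0] at step2
      linarith
    · have hbc : 0 < b' := by
        have : 0 < ‖pC‖ := norm_pos_iff.mpr hc0
        positivity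
      have h0C := sqC 0 (hDC hD0)
      rw [key, key, ← ha', ← hb'def] at h0C
      simp only [inner_zero_right, norm_zero] at h0C
      -- h0C : ‖v‖^2 - 2*a' + b' ≤ ‖v‖^2 - 2*0 + 0^2
      have ha'nn : 0 ≤ a' := by nlinarith
      have hmem : (a' / b') • pC ∈ C := hCcone pC hpC _ (div_nonneg ha'nn hbc.le)
      have h3 := sqC _ hmem
      rw [expand, key, ← ha', ← hb'def] at h3
      have hmul : a' / b' * b' = a' := div_mul_cancel₀ a' hbc.ne'
      have hsq : (a' / b') ^ 2 * b' = a' ^ 2 / b' := by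
        field_simp
      rw [hsq] at h3
      have h4 : a' / b' * a' = a' ^ 2 / b' := by field_simp
      rw [h4] at h3
      -- h3 : V - 2a' + b' ≤ V - 2*(a'^2/b') + a'^2/b'
      have heq : a' = b' := by
        have h5 : a' ^ 2 / b' * b' = a' ^ 2 := div_mul_cancel₀ _ hbc.ne'
        nlinarith [sq_nonneg (a' - b')]
      rw [heq] at step2
      linarith
  -- conclude
  have hfin : b ≤ b' := by
    have h1 : b ≤ a ^ 2 / b := by
      rw [le_div_iff₀ hb]
      nlinarith
    linarith
  have h2 := Real.sqrt_le_sqrt hfin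
  rwa [hbdef, hb'def, Real.sqrt_sq (norm_nonneg _), Real.sqrt_sq (norm_nonneg _)] at h2
end

section
/- Let C ⊆ ℝⁿ be a compact convex set and g a standard Gaussian random vector in ℝⁿ. Then the map α ↦ E[dist²(αg, C)] is nondecreasing on [0, ∞). -/
open MeasureTheory ProbabilityTheory

/-- A probability measure on `ℝⁿ` is standard Gaussian if its coordinates are independent
standard normals. -/
def IsStdGaussian {n : ℕ} (μ : Measure (EuclideanSpace ℝ (Fin n))) : Prop :=
  IsProbabilityMeasure μ ∧
    iIndepFun (fun i (x : EuclideanSpace ℝ (Fin n)) => x i) μ ∧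
    ∀ i : Fin n, Measure.map (fun x : EuclideanSpace ℝ (Fin n) => x i) μ = gaussianReal 0 1

section Aux

variable {n : ℕ}

/-- the standard gaussian on ℝ is symmetric -/
lemma gaussianReal_map_neg : (gaussianReal 0 1).map (fun t : ℝ => -t) = gaussianReal 0 1 := by
  have h := gaussianReal_map_const_mul (μ := 0) (v := 1) (-1)
  simp only [neg_one_mul, mul_one, neg_zero] at h
  convert h using 2
  norm_num

/-- second moment of the standard gaussian -/
lemma integrable_sq_gaussianReal : Integrable (fun t : ℝ => t ^ 2) (gaussianReal 0 1) := by
  rw [gaussianReal_of_var_ne_zero 0 one_ne_zero]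
  rw [integrable_withDensity_iff (measurable_gaussianPDF 0 1)
    (Filter.Eventually.of_forall fun x => ENNReal.ofReal_lt_top)]
  have h := integrable_rpow_mul_exp_neg_mul_sq (b := (2 : ℝ)⁻¹) (by norm_num)
    (s := 2) (by norm_num)
  have h2 := h.const_mul ((Real.sqrt (2 * Real.pi * ((1 : NNReal) : ℝ)))⁻¹)
  refine h2.congr (Filter.Eventually.of_forall fun x => ?_)
  dsimp only
  rw [show gaussianPDF 0 1 x = ENNReal.ofReal (gaussianPDFReal 0 1 x) from rfl,
    ENNReal.toReal_ofReal (gaussianPDFReal_nonneg 0 1 x)]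
  rw [gaussianPDFReal]
  have hx : (x : ℝ) ^ (2 : ℝ) = x ^ 2 := by
    rw [show ((2 : ℝ) = ((2 : ℕ) : ℝ)) by norm_num, Real.rpow_natCast]
  rw [hx]
  push_cast
  ring_nf

variable {μ : Measure (EuclideanSpace ℝ (Fin n))}

/-- measure of a box under a standard gaussian -/
lemma IsStdGaussian.measure_pi (hμ : IsStdGaussian μ) (A : Fin n → Set ℝ) (hA : ∀ i, MeasurableSet (A i)) :
    μ (WithLp.ofLp ⁻¹' Set.univ.pi A) = ∏ i, gaussianReal 0 1 (A i) := by
  have h := hμ.2.1.measure_inter_preimage_eq_mul (S := Finset.univ)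
    (sets := A) (fun i _ => hA i)
  have hbox : WithLp.ofLp ⁻¹' Set.univ.pi A =
      ⋂ i ∈ Finset.univ, (fun x : EuclideanSpace ℝ (Fin n) => x i) ⁻¹' A i := by
    ext x; simp [Set.mem_pi]
  rw [hbox, h]
  refine Finset.prod_congr rfl fun i _ => ?_
  rw [← hμ.2.2 i]
  exact (Measure.map_apply ((measurable_pi_apply i).comp (WithLp.measurable_ofLp 2 _)) (hA i)).symm

/-- a standard gaussian is symmetric -/
lemma IsStdGaussian.map_neg (hμ : IsStdGaussian μ) :
    μ.map (fun x : EuclideanSpace ℝ (Fin n) => -x) = μ := by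
  haveI := hμ.1
  haveI : IsProbabilityMeasure (μ.map (fun x : EuclideanSpace ℝ (Fin n) => -x)) :=
    Measure.isProbabilityMeasure_map measurable_neg.aemeasurable
  refine ext_of_generate_finite _ (by show MeasurableSpace.comap WithLp.ofLp MeasurableSpace.pi = _; rw [← generateFrom_pi, MeasurableSpace.comap_generateFrom]; rfl) (isPiSystem_pi.comap WithLp.ofLp) ?_ (by simp)
  rintro _ ⟨_, ⟨A, hA, rfl⟩, rfl⟩
  simp only [Set.mem_pi, Set.mem_univ, forall_true_left, Set.mem_setOf_eq] at hA
  have hA' : ∀ i, MeasurableSet (A i) := hA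
  rw [Measure.map_apply (f := fun x : EuclideanSpace ℝ (Fin n) => -x)
    measurable_neg ((MeasurableSet.univ_pi hA').preimage (WithLp.measurable_ofLp 2 _))]
  have hpre : (fun x : EuclideanSpace ℝ (Fin n) => -x) ⁻¹' (WithLp.ofLp ⁻¹' Set.univ.pi A) =
      WithLp.ofLp ⁻¹' Set.univ.pi (fun i => (fun t : ℝ => -t) ⁻¹' A i) := by
    ext x
    exact Iff.rfl
  rw [hpre, hμ.measure_pi _ (fun i => measurable_neg (hA' i)),
    hμ.measure_pi _ hA']
  refine Finset.prod_congr rfl fun i _ => ?_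
  conv_rhs => rw [← _root_.gaussianReal_map_neg]
  rw [Measure.map_apply (f := fun t : ℝ => -t) measurable_neg (hA' i)]

/-- second moment of coordinates -/
lemma IsStdGaussian.integrable_coord_sq (hμ : IsStdGaussian μ) (i : Fin n) :
    Integrable (fun x : EuclideanSpace ℝ (Fin n) => (x i) ^ 2) μ := by
  have h : Integrable (fun t : ℝ => t ^ 2)
      (μ.map (fun x : EuclideanSpace ℝ (Fin n) => x i)) := by
    rw [hμ.2.2 i]; exact integrable_sq_gaussianReal
  exact (integrable_map_measure (continuous_pow 2).aestronglyMeasurable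
    ((measurable_pi_apply i).comp (WithLp.measurable_ofLp 2 _)).aemeasurable).mp h

/-- second moment of the norm -/
lemma IsStdGaussian.integrable_norm_sq (hμ : IsStdGaussian μ) :
    Integrable (fun x : EuclideanSpace ℝ (Fin n) => ‖x‖ ^ 2) μ := by
  have h : Integrable (fun x : EuclideanSpace ℝ (Fin n) => ∑ i, (x i) ^ 2) μ :=
    integrable_finset_sum _ fun i _ => hμ.integrable_coord_sq i
  refine h.congr (Filter.Eventually.of_forall fun x => ?_)
  show ∑ i, (x i) ^ 2 = ‖x‖ ^ 2
  rw [EuclideanSpace.norm_eq, Real.sq_sqrt (Finset.sum_nonneg fun i _ => sq_nonneg _)]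
  simp [Real.norm_eq_abs, sq_abs]

lemma IsStdGaussian.integrable_infDist_sq (hμ : IsStdGaussian μ) (C : Set (EuclideanSpace ℝ (Fin n))) (c : ℝ) :
    Integrable (fun x : EuclideanSpace ℝ (Fin n) => (Metric.infDist (c • x) C) ^ 2) μ := by
  haveI := hμ.1
  have hcont : Continuous fun x : EuclideanSpace ℝ (Fin n) => (Metric.infDist (c • x) C) ^ 2 :=
    ((Metric.continuous_infDist_pt C).comp (continuous_const_smul c)).pow 2
  refine Integrable.mono' ((hμ.integrable_norm_sq.const_mul (2 * c ^ 2)).add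
      (integrable_const (2 * (Metric.infDist 0 C) ^ 2))) hcont.aestronglyMeasurable
    (Filter.Eventually.of_forall fun x => ?_)
  have h0 : (0 : ℝ) ≤ Metric.infDist (c • x) C := Metric.infDist_nonneg
  have h2 : dist (c • x) (0 : EuclideanSpace ℝ (Fin n)) = |c| * ‖x‖ := by
    rw [dist_zero_right, norm_smul, Real.norm_eq_abs]
  have h1 : Metric.infDist (c • x) C ≤ Metric.infDist 0 C + |c| * ‖x‖ := by
    rw [← h2]; exact Metric.infDist_le_infDist_add_dist
  rw [Real.norm_eq_abs, abs_of_nonneg (pow_nonneg h0 2)]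
  have h3 : Metric.infDist (c • x) C ^ 2 ≤ (Metric.infDist 0 C + |c| * ‖x‖) ^ 2 := by
    apply pow_le_pow_left₀ h0 h1
  have h4 : (|c| * ‖x‖) ^ 2 = c ^ 2 * ‖x‖ ^ 2 := by rw [mul_pow, sq_abs]
  simp only [Pi.add_apply]
  nlinarith [sq_nonneg (Metric.infDist 0 C - |c| * ‖x‖), abs_nonneg c, norm_nonneg x]

end Aux

/-- distance to a nonempty compact convex set is a convex function -/
lemma convexOn_infDist_of_compact {E : Type*} [NormedAddCommGroup E] [NormedSpace ℝ E]
    {C : Set E} (hne : C.Nonempty) (hCc : IsCompact C) (hC : Convex ℝ C) :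
    ConvexOn ℝ Set.univ (fun x => Metric.infDist x C) := by
  refine ⟨convex_univ, fun x _ y _ a b ha hb hab => ?_⟩
  obtain ⟨cx, hcx, hcxd⟩ := hCc.exists_infDist_eq_dist hne x
  obtain ⟨cy, hcy, hcyd⟩ := hCc.exists_infDist_eq_dist hne y
  have hmem : a • cx + b • cy ∈ C := hC hcx hcy ha hb hab
  calc Metric.infDist (a • x + b • y) C ≤ dist (a • x + b • y) (a • cx + b • cy) :=
        Metric.infDist_le_dist_of_mem hmem
    _ ≤ a * dist x cx + b * dist y cy := by
        rw [dist_eq_norm, dist_eq_norm, dist_eq_norm]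
        calc ‖a • x + b • y - (a • cx + b • cy)‖ = ‖a • (x - cx) + b • (y - cy)‖ := by
              congr 1; module
          _ ≤ ‖a • (x - cx)‖ + ‖b • (y - cy)‖ := norm_add_le _ _
          _ = a * ‖x - cx‖ + b * ‖y - cy‖ := by
              rw [norm_smul, norm_smul, Real.norm_eq_abs, Real.norm_eq_abs,
                abs_of_nonneg ha, abs_of_nonneg hb]
    _ = a * Metric.infDist x C + b * Metric.infDist y C := by rw [hcxd, hcyd]

/-- squared distance to a nonempty compact convex set is a convex function -/
lemma convexOn_infDist_sq_of_compact {E : Type*} [NormedAddCommGroup E] [NormedSpace ℝ E]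
    {C : Set E} (hne : C.Nonempty) (hCc : IsCompact C) (hC : Convex ℝ C) :
    ConvexOn ℝ Set.univ (fun x => Metric.infDist x C ^ 2) := by
  have h := convexOn_infDist_of_compact hne hCc hC
  refine ⟨convex_univ, fun x _ y _ a b ha hb hab => ?_⟩
  have h1 := h.2 (Set.mem_univ x) (Set.mem_univ y) ha hb hab
  simp only [smul_eq_mul] at h1 ⊢
  have h2 : Metric.infDist (a • x + b • y) C ^ 2 ≤
      (a * Metric.infDist x C + b * Metric.infDist y C) ^ 2 :=
    pow_le_pow_left₀ Metric.infDist_nonneg h1 2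
  have hx0 : (0 : ℝ) ≤ Metric.infDist x C := Metric.infDist_nonneg
  have hy0 : (0 : ℝ) ≤ Metric.infDist y C := Metric.infDist_nonneg
  nlinarith [mul_nonneg (mul_nonneg ha hb)
    (sq_nonneg (Metric.infDist x C - Metric.infDist y C))]

/-- For a compact convex set `C` and a standard Gaussian vector `g`, the map
`α ↦ E[dist²(α g, C)]` is nondecreasing on `[0, ∞)`. -/
theorem expected_sq_dist_smul_gaussian_monotone {n : ℕ}
    (μ : Measure (EuclideanSpace ℝ (Fin n))) (hμ : IsStdGaussian μ)
    (C : Set (EuclideanSpace ℝ (Fin n))) (hCcompact : IsCompact C) (hCconvex : Convex ℝ C) :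
    MonotoneOn (fun α : ℝ => ∫ x, (Metric.infDist (α • x) C) ^ 2 ∂μ) (Set.Ici 0) := by
  haveI := hμ.1
  rcases C.eq_empty_or_nonempty with rfl | hne
  · intro a _ b _ _
    simp [Metric.infDist_empty]
  have hconv := convexOn_infDist_sq_of_compact hne hCcompact hCconvex
  intro α hα β hβ hαβ
  simp only [Set.mem_Ici] at hα hβ
  show ∫ x, Metric.infDist (α • x) C ^ 2 ∂μ ≤ ∫ x, Metric.infDist (β • x) C ^ 2 ∂μ
  rcases eq_or_lt_of_le (hα.trans hαβ) with hβ0 | hβ0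
  · have hα0 : α = 0 := le_antisymm (hαβ.trans hβ0.symm.le) hα
    rw [hα0, ← hβ0]
  -- β > 0
  set lam : ℝ := (β + α) / (2 * β) with hlam_def
  have hlam0 : 0 ≤ lam := by positivity
  have hlam1 : 0 ≤ 1 - lam := by
    rw [hlam_def]
    rw [sub_nonneg, div_le_one (by positivity)]
    linarith
  have hlamsum : lam + (1 - lam) = 1 := by ring
  -- pointwise convexity inequality
  have hpt : ∀ x : EuclideanSpace ℝ (Fin n),
      Metric.infDist (α • x) C ^ 2 ≤
        lam * Metric.infDist (β • x) C ^ 2 +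
          (1 - lam) * Metric.infDist ((-β) • x) C ^ 2 := by
    intro x
    have hcomb : α • x = lam • (β • x) + (1 - lam) • ((-β) • x) := by
      rw [smul_smul, smul_smul, ← add_smul]
      congr 1
      rw [hlam_def]
      field_simp
      ring
    have := hconv.2 (Set.mem_univ (β • x)) (Set.mem_univ ((-β) • x)) hlam0 hlam1 hlamsum
    rw [← hcomb] at this
    exact this
  -- symmetry: the integral with -β equals the integral with β
  have hsymm : ∫ x, Metric.infDist ((-β) • x) C ^ 2 ∂μ
      = ∫ x, Metric.infDist (β • x) C ^ 2 ∂μ := by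
    have hcont : Continuous fun x : EuclideanSpace ℝ (Fin n) =>
        Metric.infDist (β • x) C ^ 2 :=
      ((Metric.continuous_infDist_pt C).comp (continuous_const_smul β)).pow 2
    calc ∫ x, Metric.infDist ((-β) • x) C ^ 2 ∂μ
        = ∫ x, Metric.infDist (β • (-x)) C ^ 2 ∂μ := by
          congr 1; ext x; rw [smul_neg, neg_smul]
      _ = ∫ x, Metric.infDist (β • x) C ^ 2
            ∂(μ.map (fun x : EuclideanSpace ℝ (Fin n) => -x)) := by
          rw [integral_map measurable_neg.aemeasurable hcont.aestronglyMeasurable]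
      _ = ∫ x, Metric.infDist (β • x) C ^ 2 ∂μ := by rw [hμ.map_neg]
  -- integrate the pointwise inequality
  have hIα := hμ.integrable_infDist_sq C α
  have hIβ := hμ.integrable_infDist_sq C β
  have hIβ' := hμ.integrable_infDist_sq C (-β)
  calc ∫ x, Metric.infDist (α • x) C ^ 2 ∂μ
      ≤ ∫ x, (lam * Metric.infDist (β • x) C ^ 2 +
          (1 - lam) * Metric.infDist ((-β) • x) C ^ 2) ∂μ := by
        refine integral_mono hIα ?_ hpt
        exact (hIβ.const_mul lam).add (hIβ'.const_mul (1 - lam))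
    _ = lam * ∫ x, Metric.infDist (β • x) C ^ 2 ∂μ +
          (1 - lam) * ∫ x, Metric.infDist ((-β) • x) C ^ 2 ∂μ := by
        rw [integral_add (hIβ.const_mul lam) (hIβ'.const_mul (1 - lam)),
          integral_const_mul, integral_const_mul]
    _ = ∫ x, Metric.infDist (β • x) C ^ 2 ∂μ := by
        rw [hsymm]; ring
end

section
/- The function t ↦ φ(t) := √2 · Γ((t+1)/2)/Γ(t/2) is strictly increasing on (0, ∞); consequently if n₀ ≤ n then b_{n₀}/b_n ≤ √(n₀/n) is implied by the stronger inequality φ(t) ≤ √t ≤ φ(t+1) for all t > 0. -/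
/-!
Since `log ∘ Γ` is convex, the increment `log Γ(s + 1/2) - log Γ(s)` is monotone in `s`, so `φ` is
monotone. The functional equation `Γ(s + 1) = s Γ(s)` gives `φ(t) φ(t + 1) = t`, hence
`φ(t) = t/(t + 1) · φ(t + 2)`, which upgrades monotonicity to strict monotonicity; and
`φ(t)² ≤ φ(t) φ(t + 1) = t ≤ φ(t + 1)²` is the sandwich.
-/

open Set

theorem ConvexOn.add_sub_le_add_sub {𝕜 : Type*} [Field 𝕜] [LinearOrder 𝕜] [IsStrictOrderedRing 𝕜]
    {s : Set 𝕜} {f : 𝕜 → 𝕜} (hf : ConvexOn 𝕜 s f) {x y h : 𝕜} (hx : x ∈ s) (hyh : y + h ∈ s)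
    (hh : 0 < h) (hxy : x ≤ y) : f (x + h) - f x ≤ f (y + h) - f y := by
  have hxh : x + h ∈ s := hf.1.ordConnected.out hx hyh ⟨by linarith, by linarith⟩
  have hy : y ∈ s := hf.1.ordConnected.out hx hyh ⟨hxy, by linarith⟩
  have hslope : slope f x (x + h) ≤ slope f y (y + h) :=
    calc slope f x (x + h) ≤ slope f x (y + h) :=
          hf.slope_mono hx ⟨hxh, by simp [hh.ne']⟩ ⟨hyh, by simp; linarith⟩ (by linarith)
      _ = slope f (y + h) x := slope_comm f x (y + h)
      _ ≤ slope f (y + h) y :=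
          hf.slope_mono hyh ⟨hx, by simp; linarith⟩ ⟨hy, by simp [hh.ne']⟩ hxy
      _ = slope f y (y + h) := slope_comm f (y + h) y
  simpa [slope_def_field, div_le_div_iff_of_pos_right hh] using hslope

theorem Real.Gamma_add_div_Gamma_le {x y h : ℝ} (hx : 0 < x) (hh : 0 < h) (hxy : x ≤ y) :
    Real.Gamma (x + h) / Real.Gamma x ≤ Real.Gamma (y + h) / Real.Gamma y := by
  have hy : 0 < y := hx.trans_le hxy
  have hlog := Real.convexOn_log_Gamma.add_sub_le_add_sub hx (show 0 < y + h by linarith) hh hxy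
  simp only [Function.comp_apply] at hlog
  rwa [← Real.log_div, ← Real.log_div, Real.log_le_log_iff] at hlog <;> positivity

noncomputable def phi (t : ℝ) : ℝ :=
  Real.sqrt 2 * Real.Gamma ((t + 1) / 2) / Real.Gamma (t / 2)

theorem phi_pos {t : ℝ} (ht : 0 < t) : 0 < phi t := by
  unfold phi
  positivity

theorem phi_mul_phi_add_one {t : ℝ} (ht : 0 < t) : phi t * phi (t + 1) = t := by
  have hrec : Real.Gamma ((t + 1 + 1) / 2) = t / 2 * Real.Gamma (t / 2) := by
    rw [show (t + 1 + 1) / 2 = t / 2 + 1 by ring, Real.Gamma_add_one (by positivity)]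
  unfold phi
  rw [hrec]
  field_simp
  rw [Real.sq_sqrt zero_le_two]

theorem phi_eq_mul_phi_add_two {t : ℝ} (ht : 0 < t) : phi t = t / (t + 1) * phi (t + 2) := by
  have h₀ := phi_mul_phi_add_one ht
  have h₁ := phi_mul_phi_add_one (show 0 < t + 1 by linarith)
  rw [add_assoc, one_add_one_eq_two] at h₁
  rw [div_mul_eq_mul_div, eq_div_iff (by positivity)]
  linear_combination phi (t + 2) * h₀ - phi t * h₁

theorem phi_monotoneOn : MonotoneOn phi (Ioi 0) := by
  intro x hx y _ hxy
  have hratio := Real.Gamma_add_div_Gamma_le (half_pos hx) one_half_pos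
    (div_le_div_of_nonneg_right hxy zero_le_two)
  simp only [phi, mul_div_assoc, add_div]
  gcongr

theorem phi_strictMonoOn : StrictMonoOn phi (Ioi 0) := by
  intro x hx y hy hxy
  rw [mem_Ioi] at hx hy
  have hcoeff : x / (x + 1) < y / (y + 1) := by
    rw [div_lt_div_iff₀ (by positivity) (by positivity)]
    linarith
  calc phi x = x / (x + 1) * phi (x + 2) := phi_eq_mul_phi_add_two hx
    _ < y / (y + 1) * phi (x + 2) := by gcongr; exact phi_pos (by linarith)
    _ ≤ y / (y + 1) * phi (y + 2) := by
        gcongr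
        exact phi_monotoneOn (mem_Ioi.2 (by linarith)) (mem_Ioi.2 (by linarith)) (by linarith)
    _ = phi y := (phi_eq_mul_phi_add_two hy).symm

theorem phi_le_phi_add_one {t : ℝ} (ht : 0 < t) : phi t ≤ phi (t + 1) :=
  phi_monotoneOn ht (mem_Ioi.2 (by linarith)) (by linarith)

theorem phi_le_sqrt {t : ℝ} (ht : 0 < t) : phi t ≤ Real.sqrt t := by
  rw [Real.le_sqrt (phi_pos ht).le ht.le]
  calc phi t ^ 2 ≤ phi t * phi (t + 1) := by
        rw [sq]; gcongr; exacts [(phi_pos ht).le, phi_le_phi_add_one ht]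
    _ = t := phi_mul_phi_add_one ht

theorem sqrt_le_phi_add_one {t : ℝ} (ht : 0 < t) : Real.sqrt t ≤ phi (t + 1) := by
  rw [Real.sqrt_le_left (phi_pos (by linarith)).le]
  calc t = phi t * phi (t + 1) := (phi_mul_phi_add_one ht).symm
    _ ≤ phi (t + 1) ^ 2 := by
        rw [sq]; gcongr; exacts [(phi_pos (by linarith)).le, phi_le_phi_add_one ht]

/-- The function `φ(t) = √2 Γ((t+1)/2)/Γ(t/2)` is strictly increasing on `(0, ∞)` and
satisfies `φ(t) ≤ √t ≤ φ(t+1)` for all `t > 0`. -/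
theorem phi_strictMono_and_sandwich :
    StrictMonoOn (fun t : ℝ => Real.sqrt 2 * Real.Gamma ((t + 1) / 2) / Real.Gamma (t / 2))
        (Set.Ioi 0) ∧
      ∀ t : ℝ, 0 < t →
        Real.sqrt 2 * Real.Gamma ((t + 1) / 2) / Real.Gamma (t / 2) ≤ Real.sqrt t ∧
          Real.sqrt t ≤ Real.sqrt 2 * Real.Gamma ((t + 1 + 1) / 2) / Real.Gamma ((t + 1) / 2) :=
  ⟨phi_strictMonoOn, fun _ ht => ⟨phi_le_sqrt ht, sqrt_le_phi_add_one ht⟩⟩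
end
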